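/- There are no Gaussian integers x, y, z with xyz ≠ 0 and gcd(x, y, z) a unit such that x^4 + y^4 = (1+i)·z^2. -/

import Mathlib

/-!
Let `π = 1 + i`, the prime of `ℤ[i]` above `2`; `π² = 2i`, so `π² ∣ 2` but `π³ ∤ 2`.
Every `w` prime to `π` satisfies `w⁴ ≡ 1 (mod π⁴)`, since `w⁴ - 1 = ∏ (w - u)` over the four units
`u` and all units are `≡ 1 (mod π)`. As `π ∣ x⁴ + y⁴`, either `π` divides both `x` and `y`, or
neither, and then `x⁴ + y⁴ ≡ 2 (mod π⁴)`. In both cases `π² ∣ π z²`, so `π ∣ z`. In the first case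
`π` is a common divisor of `x, y, z`; in the second `π³ ∣ π z²` forces `π³ ∣ 2`.
-/

open Zsqrtd

local notation "π" => (1 + sqrtd : GaussianInt)

theorem Prime.dvd_of_sq_dvd_mul_sq {M : Type*} [CommMonoidWithZero M] [IsCancelMulZero M]
    {p z : M} (hp : Prime p) (h : p ^ 2 ∣ p * z ^ 2) : p ∣ z := by
  rw [sq p, mul_dvd_mul_iff_left hp.ne_zero] at h
  exact hp.dvd_of_dvd_pow h

namespace GaussianInt

theorem isUnit_sqrtd : IsUnit (sqrtd : GaussianInt) :=
  IsUnit.of_mul_eq_one (-sqrtd) (by ext <;> simp)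

/-- Reduction modulo `1 + i`, which sends `i` to `1`. -/
def toZModTwo : GaussianInt →+* ZMod 2 := Zsqrtd.lift ⟨1, by decide⟩

theorem toZModTwo_apply (w : GaussianInt) : toZModTwo w = w.re + w.im := by
  simp [toZModTwo]

theorem one_add_sqrtd_dvd_iff {w : GaussianInt} : π ∣ w ↔ toZModTwo w = 0 := by
  constructor
  · rintro ⟨t, rfl⟩
    have hπ : toZModTwo π = 0 := by rw [toZModTwo_apply]; simp; decide
    rw [map_mul, hπ, zero_mul]
  · intro hw
    rw [toZModTwo_apply, ← Int.cast_add, ZMod.intCast_zmod_eq_zero_iff_dvd] at hw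
    obtain ⟨k, hk⟩ := hw
    refine ⟨⟨k, k - w.re⟩, ?_⟩
    ext <;> simp; omega

theorem prime_one_add_sqrtd : Prime π := by
  refine ⟨fun h => by simpa using congrArg re h, fun h => ?_, fun a b hab => ?_⟩
  · have h2 := h.map toZModTwo
    rw [one_add_sqrtd_dvd_iff.1 dvd_rfl] at h2
    exact not_isUnit_zero h2
  · simpa only [one_add_sqrtd_dvd_iff, map_mul, mul_eq_zero] using hab

theorem one_add_sqrtd_dvd_sub_of_not_dvd {w u : GaussianInt} (hw : ¬ π ∣ w) (hu : ¬ π ∣ u) :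
    π ∣ w - u := by
  rw [one_add_sqrtd_dvd_iff, map_sub] at *
  exact (by decide : ∀ a b : ZMod 2, a ≠ 0 → b ≠ 0 → a - b = 0) _ _ hw hu

theorem one_add_sqrtd_pow_four_dvd_pow_four_sub_one {w : GaussianInt} (hw : ¬ π ∣ w) :
    π ^ 4 ∣ w ^ 4 - 1 := by
  have hunit {u : GaussianInt} (hu : IsUnit u) : π ∣ w - u :=
    one_add_sqrtd_dvd_sub_of_not_dvd hw fun h =>
      prime_one_add_sqrtd.not_isUnit (isUnit_of_dvd_unit h hu)
  have hfactor : w ^ 4 - 1 = (w - 1) * (w - (-1)) * (w - sqrtd) * (w - (-sqrtd)) := by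
    have hi : (sqrtd : GaussianInt) * sqrtd = -1 := by ext <;> simp
    linear_combination (w ^ 2 - 1) * hi
  rw [hfactor, pow_succ, pow_succ, pow_succ, pow_one]
  exact mul_dvd_mul (mul_dvd_mul (mul_dvd_mul (hunit isUnit_one) (hunit isUnit_one.neg))
    (hunit isUnit_sqrtd)) (hunit isUnit_sqrtd.neg)

theorem one_add_sqrtd_pow_four_dvd_pow_four_add_pow_four_sub_two {x y : GaussianInt}
    (hx : ¬ π ∣ x) (hy : ¬ π ∣ y) : π ^ 4 ∣ x ^ 4 + y ^ 4 - 2 := by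
  convert dvd_add (one_add_sqrtd_pow_four_dvd_pow_four_sub_one hx)
    (one_add_sqrtd_pow_four_dvd_pow_four_sub_one hy) using 1
  ring

theorem one_add_sqrtd_sq_mul_neg_sqrtd : π ^ 2 * -sqrtd = 2 := by
  ext <;> simp [sq]

theorem not_one_add_sqrtd_pow_three_dvd_two : ¬ π ^ 3 ∣ 2 := by
  rw [← one_add_sqrtd_sq_mul_neg_sqrtd, pow_succ,
    mul_dvd_mul_iff_left (pow_ne_zero 2 prime_one_add_sqrtd.ne_zero)]
  exact fun h => prime_one_add_sqrtd.not_isUnit (isUnit_of_dvd_unit h isUnit_sqrtd.neg)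

end GaussianInt

open GaussianInt in
/-- The equation `x⁴ + y⁴ = (1+i)·z²` has no nontrivial solutions over the
Gaussian integers. -/
theorem no_nontrivial_solution_x4_add_y4_eq_one_add_i_z2 :
    ¬ ∃ x y z : GaussianInt, x * y * z ≠ 0 ∧
      (∀ d : GaussianInt, d ∣ x → d ∣ y → d ∣ z → IsUnit d) ∧
      x ^ 4 + y ^ 4 = (1 + sqrtd) * z ^ 2 := by
  rintro ⟨x, y, z, -, hgcd, h⟩
  have hπ : Prime π := prime_one_add_sqrtd
  have hxy : π ∣ x ↔ π ∣ y := by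
    have hv : π ∣ x ^ 4 + y ^ 4 := h ▸ dvd_mul_right _ _
    exact ⟨fun hx => hπ.dvd_of_dvd_pow ((dvd_add_right (dvd_pow hx four_ne_zero)).1 hv),
      fun hy => hπ.dvd_of_dvd_pow ((dvd_add_left (dvd_pow hy four_ne_zero)).1 hv)⟩
  have hπ24 : π ^ 2 ∣ π ^ 4 := pow_dvd_pow π (by norm_num)
  by_cases hx : π ∣ x
  · have hy := hxy.1 hx
    have hv : π ^ 4 ∣ π * z ^ 2 :=
      h ▸ dvd_add (pow_dvd_pow_of_dvd hx 4) (pow_dvd_pow_of_dvd hy 4)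
    exact hπ.not_isUnit (hgcd π hx hy (hπ.dvd_of_sq_dvd_mul_sq (hπ24.trans hv)))
  · have hv := h ▸ one_add_sqrtd_pow_four_dvd_pow_four_add_pow_four_sub_two hx (mt hxy.2 hx)
    have hπ22 : π ^ 2 ∣ 2 := ⟨_, one_add_sqrtd_sq_mul_neg_sqrtd.symm⟩
    have hz : π ∣ z := hπ.dvd_of_sq_dvd_mul_sq ((dvd_sub_left hπ22).1 (hπ24.trans hv))
    have hπ3 : π ^ 3 ∣ π * z ^ 2 := by
      rw [pow_succ']
      exact mul_dvd_mul_left π (pow_dvd_pow_of_dvd hz 2)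
    exact not_one_add_sqrtd_pow_three_dvd_two
      ((dvd_sub_right hπ3).1 ((pow_dvd_pow π (by norm_num)).trans hv))
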